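/- Let X be a set and T a bounded operator on ℓ²(X) satisfying the uniform finite-approximation property: for all ε > 0 there is M such that for all x ∈ X there exists v ∈ ℓ²(X) with support of size at most M and ‖Tδ_x − v‖ < ε. If S is another bounded operator with the same property, then the product TS also has this property. -/

import Mathlib

noncomputable section
open scoped ENNReal
open Filter

/-- The Hilbert space ℓ²(X). -/
abbrev L2 (X : Type*) := lp (fun _ : X => ℂ) 2

/-- The Dirac function δ_x ∈ ℓ²(X). -/
noncomputable def dirac {X : Type*} (x : X) : L2 X := by
  classical exact lp.single 2 x 1

/-- The uniform finite-approximation property of Proposition 1(2). -/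
def UniformApprox {X : Type*} (T : L2 X →L[ℂ] L2 X) : Prop :=
  ∀ ε : ℝ, 0 < ε → ∃ M : ℕ, ∀ x : X, ∃ v : L2 X,
    (∃ s : Finset X, s.card ≤ M ∧ ∀ y ∉ s, v y = 0) ∧ ‖T (dirac x) - v‖ < ε

/-! If `S δ_x ≈ v = ∑_{y ∈ s} v(y) δ_y` with `|s| ≤ M_S`, and `T δ_y ≈ w_y` with `w_y` supported on
at most `M_T` points, then `T S δ_x ≈ T v ≈ ∑_{y ∈ s} v(y) w_y`, which is supported on at most
`M_S M_T` points. The second error is at most `M_S ‖v‖ ε_T`, and `‖v‖ ≤ ‖S‖ + ε_S` is bounded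
independently of `x`, so the approximation stays uniform. -/

open Finset

section

variable {X : Type*}

lemma norm_dirac (x : X) : ‖dirac x‖ = 1 := by
  classical
  simp [dirac, lp.norm_single]

lemma eq_sum_smul_dirac [DecidableEq X] {v : L2 X} {s : Finset X} (hv : ∀ y ∉ s, v y = 0) :
    v = ∑ y ∈ s, v y • dirac y := by
  apply lp.ext
  funext z
  rw [lp.coeFn_sum, Finset.sum_apply]
  by_cases hz : z ∈ s <;> simp [dirac, lp.single_apply, Pi.single_apply, hz, hv z]

lemma sum_smul_apply_eq_zero_of_notMem_biUnion [DecidableEq X] {s : Finset X}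
    {t : X → Finset X} {w : X → L2 X} (hw : ∀ y ∈ s, ∀ z ∉ t y, w y z = 0) (c : X → ℂ)
    {z : X} (hz : z ∉ s.biUnion t) : (∑ y ∈ s, c y • w y) z = 0 := by
  rw [lp.coeFn_sum, Finset.sum_apply]
  refine sum_eq_zero fun y hy => ?_
  rw [lp.coeFn_smul, Pi.smul_apply, hw y hy z fun hzt => hz (mem_biUnion.2 ⟨y, hy, hzt⟩),
    smul_zero]

lemma norm_apply_sub_sum_smul_le {E : Type*} [NormedAddCommGroup E] [NormedSpace ℂ E]
    (T : L2 X →L[ℂ] E) (u : L2 X) {v : L2 X} {s : Finset X} (hv : ∀ y ∉ s, v y = 0)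
    {w : X → E} {η : ℝ} (hw : ∀ y ∈ s, ‖T (dirac y) - w y‖ ≤ η) :
    ‖T u - ∑ y ∈ s, v y • w y‖ ≤ ‖T‖ * ‖u - v‖ + s.card * ‖v‖ * η := by
  classical
  have hTv : T v = ∑ y ∈ s, v y • T (dirac y) := by
    conv_lhs => rw [eq_sum_smul_dirac hv]
    simp only [map_sum, map_smul]
  have hsplit : T u - ∑ y ∈ s, v y • w y =
      T (u - v) + ∑ y ∈ s, v y • (T (dirac y) - w y) := by
    simp only [map_sub, hTv, smul_sub, sum_sub_distrib]
    abel
  have hterm : ∀ y ∈ s, ‖v y • (T (dirac y) - w y)‖ ≤ ‖v‖ * η := fun y hy => by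
    rw [norm_smul]
    exact mul_le_mul (lp.norm_apply_le_norm two_ne_zero v y) (hw y hy) (norm_nonneg _)
      (norm_nonneg _)
  calc ‖T u - ∑ y ∈ s, v y • w y‖
      ≤ ‖T (u - v)‖ + ∑ y ∈ s, ‖v y • (T (dirac y) - w y)‖ := by
        rw [hsplit]
        exact (norm_add_le _ _).trans (add_le_add_right (norm_sum_le _ _) _)
    _ ≤ ‖T‖ * ‖u - v‖ + ∑ _y ∈ s, ‖v‖ * η := add_le_add (T.le_opNorm _) (sum_le_sum hterm)
    _ = ‖T‖ * ‖u - v‖ + s.card * ‖v‖ * η := by rw [sum_const, nsmul_eq_mul, mul_assoc]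

end

/-- The uniform finite-approximation property is preserved under products:
if T and S both have it, then so does TS. -/
theorem uniformApprox_comp {X : Type*} (T S : L2 X →L[ℂ] L2 X)
    (hT : UniformApprox T) (hS : UniformApprox S) : UniformApprox (T.comp S) := by
  classical
  intro ε hε
  obtain ⟨εS, hεS, hTεS⟩ := exists_pos_mul_lt (half_pos hε) ‖T‖
  obtain ⟨MS, hMS⟩ := hS εS hεS
  obtain ⟨εT, hεT, hSεT⟩ := exists_pos_mul_lt (half_pos hε) (MS * (‖S‖ + εS))
  obtain ⟨MT, hMT⟩ := hT εT hεT
  choose w hwsupp hw using hMT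
  choose t ht hwt using hwsupp
  refine ⟨MS * MT, fun x => ?_⟩
  obtain ⟨v, ⟨s, hs, hvs⟩, hSv⟩ := hMS x
  have hv : ‖v‖ ≤ ‖S‖ + εS := calc
    ‖v‖ ≤ ‖S (dirac x)‖ + ‖S (dirac x) - v‖ := norm_le_norm_add_norm_sub (S (dirac x)) v
    _ ≤ ‖S‖ + εS := add_le_add (by simpa [norm_dirac] using S.le_opNorm (dirac x)) hSv.le
  refine ⟨∑ y ∈ s, v y • w y, ⟨s.biUnion t, ?_, fun z hz =>
    sum_smul_apply_eq_zero_of_notMem_biUnion (fun y _ => hwt y) v hz⟩, ?_⟩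
  · exact (card_biUnion_le_card_mul s t MT fun y _ => ht y).trans (Nat.mul_le_mul_right _ hs)
  · calc ‖T.comp S (dirac x) - ∑ y ∈ s, v y • w y‖
        ≤ ‖T‖ * ‖S (dirac x) - v‖ + s.card * ‖v‖ * εT :=
          norm_apply_sub_sum_smul_le T _ hvs fun y _ => (hw y).le
      _ ≤ ‖T‖ * εS + MS * (‖S‖ + εS) * εT := by gcongr
      _ < ε / 2 + ε / 2 := add_lt_add hTεS hSεT
      _ = ε := add_halves ε
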